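/- There exists a two-layer ReLU encoder realizing the quadratic Veronese map in every column: there exist an h_1-headed ReLU attention module α_1 : ℝ^{n×p} → ℝ^{mh_1×p}, a one-layer ReLU feed-forward neural network φ_1 : ℝ^{mh_1×p} → ℝ^{n_1×p}, an h_2-headed ReLU attention module α_2 : ℝ^{n_1×p} → ℝ^{mh_2×p}, and a one-layer ReLU feed-forward neural network φ_2 : ℝ^{mh_2×p} → ℝ^{n_2×p}, such that ε_2 = φ_2 ∘ α_2 ∘ φ_1 ∘ α_1 satisfies, for every X ∈ ℝ^{n×p}, that ε_2(X) is the block-diagonal matrix with p diagonal blocks each equal to v_2(X) ∈ ℝ^{(np+2)(np+1)/2}, where v_2 is the quadratic Veronese map on the np entries of X. In particular, every monomial of degree not more than two in the entries of X appears in every column of ε_2(X). -/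

import Mathlib

noncomputable section

open Matrix

/-- The rectified linear unit. -/
def relu (x : ℝ) : ℝ := max x 0

/-- Entrywise ReLU of a matrix. -/
def matRelu {a b : ℕ} (M : Matrix (Fin a) (Fin b) ℝ) : Matrix (Fin a) (Fin b) ℝ :=
  Matrix.of fun i j => relu (M i j)

/-- The ReLU-activated attention module `α(X) = (A_V X + B_V) · ReLU((A_K X + B_K)ᵀ (A_Q X + B_Q))`. -/
def attention {n p d m : ℕ}
    (AQ AK : Matrix (Fin d) (Fin n) ℝ) (AV : Matrix (Fin m) (Fin n) ℝ)
    (BQ BK : Matrix (Fin d) (Fin p) ℝ) (BV : Matrix (Fin m) (Fin p) ℝ)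
    (X : Matrix (Fin n) (Fin p) ℝ) : Matrix (Fin m) (Fin p) ℝ :=
  (AV * X + BV) * matRelu ((AK * X + BK)ᵀ * (AQ * X + BQ))

/-- An `h`-headed ReLU attention module: `h` attention modules stacked vertically, giving a map
`ℝ^{n×p} → ℝ^{hm×p}`. -/
def multiheadAttention {n p d m h : ℕ}
    (AQ AK : Fin h → Matrix (Fin d) (Fin n) ℝ) (AV : Fin h → Matrix (Fin m) (Fin n) ℝ)
    (BQ BK : Fin h → Matrix (Fin d) (Fin p) ℝ) (BV : Fin h → Matrix (Fin m) (Fin p) ℝ)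
    (X : Matrix (Fin n) (Fin p) ℝ) : Matrix (Fin (h * m)) (Fin p) ℝ :=
  Matrix.of fun i j =>
    attention (AQ (finProdFinEquiv.symm i).1) (AK (finProdFinEquiv.symm i).1)
      (AV (finProdFinEquiv.symm i).1) (BQ (finProdFinEquiv.symm i).1)
      (BK (finProdFinEquiv.symm i).1) (BV (finProdFinEquiv.symm i).1) X
      (finProdFinEquiv.symm i).2 j

/-- A one-layer ReLU feed-forward neural network `φ(x) = A₂ ReLU(A₁ x + b₁) + b₂`. -/
def oneLayerNN {a b c : ℕ} (A1 : Matrix (Fin b) (Fin a) ℝ) (b1 : Fin b → ℝ)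
    (A2 : Matrix (Fin c) (Fin b) ℝ) (b2 : Fin c → ℝ) (x : Fin a → ℝ) : Fin c → ℝ :=
  A2.mulVec (fun i => relu (A1.mulVec x i + b1 i)) + b2

/-- Apply a map `φ : ℝ^a → ℝ^c` columnwise to a matrix `X ∈ ℝ^{a×p}`. -/
def colwise {a c p : ℕ} (φ : (Fin a → ℝ) → (Fin c → ℝ))
    (X : Matrix (Fin a) (Fin p) ℝ) : Matrix (Fin c) (Fin p) ℝ :=
  Matrix.of fun i j => φ (fun r => X r j) i

/-- The index set of the quadratic Veronese map on the `n*p` entries of an `n × p` matrix: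
exponent vectors of total degree at most `2`. It has cardinality `(np+2)(np+1)/2`. -/
abbrev QuadIdx (n p : ℕ) : Type := { d : Fin n × Fin p → Fin 3 // ∑ a, (d a : ℕ) ≤ 2 }

/-!
The first attention layer has a head for each pair of columns `(j, c)`, with constant keys and
queries, which copies column `c` of `X` into column `j`; column `j` of its output then holds all
entries of `X` in the `j`-th block and zeros elsewhere. So every entry of `X`, and the constant
`1`, is read off that output by a fixed affine map as a scalar `p × p` matrix. A monomial of
degree at most two is a product `f * g` of two such factors, and a ReLU attention head with key
`f • 1` and query `± g • 1` outputs `relu (± f * g) • 1`; the two signs recover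
`f * g = relu (f * g) - relu (-(f * g))`. The feed-forward networks only have to be linear maps
(by the same identity): the identity after the first layer, and after the second the map that
recombines the two signs and moves each monomial into the block of its column.
-/

section Monomials

variable (ι : Type*) [Fintype ι]

/-- The coordinate `none` carries the missing degree `k - ∑ a, d a`. -/
def homogenizeEquiv (k : ℕ) :
    { d : ι → Fin (k + 1) // ∑ a, (d a : ℕ) ≤ k } ≃ { P : Option ι → ℕ // ∑ o, P o = k } where
  toFun d := ⟨fun o => o.elim (k - ∑ a, (d.1 a : ℕ)) fun a => d.1 a, by
    have := d.2
    rw [Fintype.sum_option]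
    simp only [Option.elim]
    omega⟩
  invFun P := ⟨fun a => ⟨P.1 (some a), by
      have h := P.2
      have := Finset.single_le_sum (fun b _ => Nat.zero_le (P.1 (some b))) (Finset.mem_univ a)
      rw [Fintype.sum_option] at h
      omega⟩, by
    have := P.2
    rw [Fintype.sum_option] at this
    simp only
    omega⟩
  left_inv d := rfl
  right_inv P := by
    have := P.2
    rw [Fintype.sum_option] at this
    ext (_ | a)
    · simp only [Option.elim]
      omega
    · rfl

def boundedDegreeEquivSym [DecidableEq ι] (k : ℕ) :
    { d : ι → Fin (k + 1) // ∑ a, (d a : ℕ) ≤ k } ≃ Sym (Option ι) k :=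
  (homogenizeEquiv ι k).trans (Sym.equivNatSumOfFintype (Option ι) k).symm

variable {ι} [DecidableEq ι]

theorem prod_pow_eq_prod_map_boundedDegreeEquivSym {R : Type*} [CommMonoid R] {k : ℕ}
    (d : { d : ι → Fin (k + 1) // ∑ a, (d a : ℕ) ≤ k }) (x : ι → R) :
    ∏ a, x a ^ (d.1 a : ℕ) =
      ((boundedDegreeEquivSym ι k d : Multiset (Option ι)).map fun o => o.elim 1 x).prod := by
  rw [Multiset.prod_map_eq_finprod, finprod_eq_prod_of_fintype, Fintype.prod_option]
  have hcount (o : Option ι) :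
      (boundedDegreeEquivSym ι k d : Multiset (Option ι)).count o =
        (homogenizeEquiv ι k d).1 o := by
    rw [← Sym.coe_equivNatSumOfFintype_apply_apply, boundedDegreeEquivSym, Equiv.trans_apply,
      Equiv.apply_symm_apply]
  simp only [hcount, Option.elim, one_pow, one_mul]
  rfl

theorem exists_prod_pow_eq_mul {R : Type*} [CommMonoid R]
    (d : { d : ι → Fin 3 // ∑ a, (d a : ℕ) ≤ 2 }) :
    ∃ o₁ o₂ : Option ι, ∀ x : ι → R, ∏ a, x a ^ (d.1 a : ℕ) = o₁.elim 1 x * o₂.elim 1 x := by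
  obtain ⟨o₁, o₂, h⟩ := Multiset.card_eq_two.1 (boundedDegreeEquivSym ι 2 d).card_coe
  refine ⟨o₁, o₂, fun x => ?_⟩
  rw [prod_pow_eq_prod_map_boundedDegreeEquivSym, h]
  simp

end Monomials

theorem card_quadIdx (n p : ℕ) :
    Fintype.card (QuadIdx n p) = (n * p + 2) * (n * p + 1) / 2 := by
  rw [Fintype.card_congr (boundedDegreeEquivSym _ 2), Sym.card_sym_eq_choose,
    Nat.choose_two_right]
  simp

theorem relu_sub_relu_neg (x : ℝ) : relu x - relu (-x) = x :=
  max_zero_sub_max_neg_zero_eq_self x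

theorem matRelu_smul_one {a : ℕ} (c : ℝ) :
    matRelu (c • (1 : Matrix (Fin a) (Fin a) ℝ)) = relu c • 1 := by
  ext i j
  by_cases h : i = j <;> simp [matRelu, relu, h]

theorem matRelu_of_nonneg {a b : ℕ} {M : Matrix (Fin a) (Fin b) ℝ} (hM : ∀ i j, 0 ≤ M i j) :
    matRelu M = M := by
  ext i j
  exact max_eq_left (hM i j)

section ReluSplit

variable {N : ℕ}

def reluSplit (v : Fin N → ℝ) : Fin (2 * N) → ℝ := fun t =>
  relu ((-1) ^ ((finProdFinEquiv.symm t).1 : ℕ) * v (finProdFinEquiv.symm t).2)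

variable (N) in
def unsplit : Matrix (Fin N) (Fin (2 * N)) ℝ :=
  Matrix.of fun κ t =>
    if (finProdFinEquiv.symm t).2 = κ then (-1) ^ ((finProdFinEquiv.symm t).1 : ℕ) else 0

theorem transpose_unsplit_mulVec (v : Fin N → ℝ) (t : Fin (2 * N)) :
    ((unsplit N)ᵀ *ᵥ v) t =
      (-1) ^ ((finProdFinEquiv.symm t).1 : ℕ) * v (finProdFinEquiv.symm t).2 := by
  simp [unsplit, mulVec, dotProduct]

theorem unsplit_mulVec_reluSplit (v : Fin N → ℝ) : unsplit N *ᵥ reluSplit v = v := by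
  ext κ
  simp only [unsplit, reluSplit, mulVec, dotProduct, of_apply, ite_mul, zero_mul]
  rw [← finProdFinEquiv.sum_comp, Fintype.sum_prod_type, Fin.sum_univ_two]
  simpa [← sub_eq_add_neg] using relu_sub_relu_neg (v κ)

end ReluSplit

theorem colwise_mulVec {a c p : ℕ} (L : Matrix (Fin c) (Fin a) ℝ)
    (M : Matrix (Fin a) (Fin p) ℝ) :
    colwise (L *ᵥ ·) M = L * M := by
  ext i j
  simp [colwise, mulVec, dotProduct, mul_apply]

theorem exists_oneLayerNN_eq_mulVec {a c : ℕ} (L : Matrix (Fin c) (Fin a) ℝ) :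
    ∃ (w : ℕ) (A₁ : Matrix (Fin w) (Fin a) ℝ) (b₁ : Fin w → ℝ) (A₂ : Matrix (Fin c) (Fin w) ℝ)
      (b₂ : Fin c → ℝ), oneLayerNN A₁ b₁ A₂ b₂ = (L *ᵥ ·) := by
  refine ⟨2 * a, (unsplit a)ᵀ, 0, L * unsplit a, 0, funext fun x => ?_⟩
  have hidden :
      (fun t => relu (((unsplit a)ᵀ *ᵥ x) t + (0 : Fin (2 * a) → ℝ) t)) = reluSplit x := by
    ext t
    rw [Pi.zero_apply, add_zero, transpose_unsplit_mulVec, reluSplit]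
  rw [oneLayerNN, hidden, ← mulVec_mulVec, unsplit_mulVec_reluSplit, add_zero]

/-- The vertical stack of the `p × p` scalar matrices `y t • 1`. -/
def stackScalar (p : ℕ) {M : ℕ} (y : Fin M → ℝ) : Matrix (Fin (M * p)) (Fin p) ℝ :=
  Matrix.of fun r j => if (finProdFinEquiv.symm r).2 = j then y (finProdFinEquiv.symm r).1 else 0

/-- The block-diagonal matrix with `p` diagonal blocks, each equal to the column `v`. -/
def blockDiagVec (p : ℕ) {N : ℕ} (v : Fin N → ℝ) : Matrix (Fin (p * N)) (Fin p) ℝ :=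
  Matrix.of fun r j => if (finProdFinEquiv.symm r).1 = j then v (finProdFinEquiv.symm r).2 else 0

theorem exists_mul_stackScalar_eq_blockDiagVec (p : ℕ) {M N : ℕ} (R : Matrix (Fin N) (Fin M) ℝ) :
    ∃ L : Matrix (Fin (p * N)) (Fin (M * p)) ℝ,
      ∀ y, L * stackScalar p y = blockDiagVec p (R *ᵥ y) := by
  refine ⟨Matrix.of fun r u => if (finProdFinEquiv.symm u).2 = (finProdFinEquiv.symm r).1
    then R (finProdFinEquiv.symm r).2 (finProdFinEquiv.symm u).1 else 0, fun y => ?_⟩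
  ext r j
  obtain ⟨⟨j', κ⟩, rfl⟩ := finProdFinEquiv.surjective r
  simp only [stackScalar, blockDiagVec, mul_apply, of_apply, mulVec, dotProduct]
  rw [← finProdFinEquiv.sum_comp, Fintype.sum_prod_type]
  by_cases h : j' = j <;> simp [h, eq_comm (a := j)]

theorem attention_eq_relu_mul_smul_one {p q : ℕ} {AQ AK : Matrix (Fin p) (Fin q) ℝ}
    {BQ BK : Matrix (Fin p) (Fin p) ℝ} {Z : Matrix (Fin q) (Fin p) ℝ} {a b : ℝ}
    (hK : AK * Z + BK = a • 1) (hQ : AQ * Z + BQ = b • 1) :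
    attention AQ AK (0 : Matrix (Fin p) (Fin q) ℝ) BQ BK 1 Z = relu (a * b) • 1 := by
  rw [attention, hK, hQ, transpose_smul, transpose_one, smul_mul_smul_comm, mul_one,
    matRelu_smul_one, Matrix.zero_mul, zero_add, Matrix.one_mul]

theorem multiheadAttention_eq_stackScalar {n p d h : ℕ} {AQ AK : Fin h → Matrix (Fin d) (Fin n) ℝ}
    {AV : Fin h → Matrix (Fin p) (Fin n) ℝ} {BQ BK : Fin h → Matrix (Fin d) (Fin p) ℝ}
    {BV : Fin h → Matrix (Fin p) (Fin p) ℝ} {X : Matrix (Fin n) (Fin p) ℝ} {y : Fin h → ℝ}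
    (hy : ∀ t, attention (AQ t) (AK t) (AV t) (BQ t) (BK t) (BV t) X
      = y t • (1 : Matrix (Fin p) (Fin p) ℝ)) :
    multiheadAttention AQ AK AV BQ BK BV X = stackScalar p y := by
  ext r j
  simp [multiheadAttention, stackScalar, hy, one_apply]

def IsScalarReadable {α : Type*} {q p : ℕ} (Z : α → Matrix (Fin q) (Fin p) ℝ) (f : α → ℝ) :
    Prop :=
  ∃ (A : Matrix (Fin p) (Fin q) ℝ) (B : Matrix (Fin p) (Fin p) ℝ), ∀ x, A * Z x + B = f x • 1

namespace IsScalarReadable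

variable {α : Type*} {q p : ℕ} {Z : α → Matrix (Fin q) (Fin p) ℝ}

theorem const (c : ℝ) : IsScalarReadable Z fun _ => c :=
  ⟨0, c • 1, fun _ => by rw [Matrix.zero_mul, zero_add]⟩

theorem const_mul {f : α → ℝ} (hf : IsScalarReadable Z f) (c : ℝ) :
    IsScalarReadable Z fun x => c * f x := by
  obtain ⟨A, B, h⟩ := hf
  exact ⟨c • A, c • B, fun x => by rw [Matrix.smul_mul, ← smul_add, h, smul_smul]⟩

theorem of_rows {f : α → ℝ} (σ : Fin p → Fin q)
    (h : ∀ x j k, Z x (σ j) k = if j = k then f x else 0) : IsScalarReadable Z f := by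
  refine ⟨(1 : Matrix (Fin q) (Fin q) ℝ).submatrix σ id, 0, fun x => ?_⟩
  ext j k
  simp [mul_apply, one_apply, h]

theorem option_elim {ι : Type*} {x : α → ι → ℝ} (hx : ∀ a, IsScalarReadable Z fun X => x X a)
    (o : Option ι) :
    IsScalarReadable Z fun X => o.elim 1 (x X) := by
  cases o with
  | none => exact const 1
  | some a => exact hx a

end IsScalarReadable

theorem attention_single {n p : ℕ} (X : Matrix (Fin n) (Fin p) ℝ) (c j : Fin p) :
    attention (0 : Matrix (Fin 1) (Fin n) ℝ) 0 1 (single 0 j 1) (single 0 c 1) 0 X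
      = X * single c j (1 : ℝ) := by
  have hpattern : matRelu (single c j (1 : ℝ)) = single c j 1 :=
    matRelu_of_nonneg fun a b => by by_cases h : c = a ∧ j = b <;> simp [single, h]
  rw [attention, Matrix.zero_mul, zero_add, zero_add, Matrix.one_mul, add_zero, transpose_single,
    single_mul_single_same, mul_one, hpattern]

theorem exists_multiheadAttention_isScalarReadable_entry (n p : ℕ) :
    ∃ (d m h : ℕ) (AQ AK : Fin h → Matrix (Fin d) (Fin n) ℝ)
      (AV : Fin h → Matrix (Fin m) (Fin n) ℝ) (BQ BK : Fin h → Matrix (Fin d) (Fin p) ℝ)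
      (BV : Fin h → Matrix (Fin m) (Fin p) ℝ),
      ∀ i c, IsScalarReadable (multiheadAttention AQ AK AV BQ BK BV) fun X => X i c := by
  refine ⟨1, n, p * p, 0, 0, 1, fun t => single 0 (finProdFinEquiv.symm t).1 1,
    fun t => single 0 (finProdFinEquiv.symm t).2 1, 0, fun i c => ?_⟩
  refine IsScalarReadable.of_rows (fun j => finProdFinEquiv (finProdFinEquiv (j, c), i))
    fun X j k => ?_
  simp only [multiheadAttention, of_apply, Equiv.symm_apply_apply, Pi.zero_apply, Pi.one_apply,
    attention_single]
  rcases eq_or_ne j k with rfl | h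
  · simp
  · simp [h, h.symm]

/-- Head `(s, κ)` has key `f κ • 1` and query `(-1) ^ s * g κ • 1`. -/
theorem exists_multiheadAttention_eq_stackScalar_reluSplit {α : Type*} {q p N : ℕ}
    {Z : α → Matrix (Fin q) (Fin p) ℝ} {v : Fin N → α → ℝ}
    (hv : ∀ κ, ∃ f g, IsScalarReadable Z f ∧ IsScalarReadable Z g ∧ ∀ x, v κ x = f x * g x) :
    ∃ (AQ AK : Fin (2 * N) → Matrix (Fin p) (Fin q) ℝ)
      (BQ BK : Fin (2 * N) → Matrix (Fin p) (Fin p) ℝ),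
      ∀ x, multiheadAttention AQ AK (fun _ => 0) BQ BK (fun _ => 1) (Z x)
        = stackScalar p (reluSplit fun κ => v κ x) := by
  choose f g hf hg hfg using hv
  choose AK BK hK using fun t : Fin (2 * N) => hf (finProdFinEquiv.symm t).2
  choose AQ BQ hQ using fun t : Fin (2 * N) =>
    (hg (finProdFinEquiv.symm t).2).const_mul ((-1) ^ ((finProdFinEquiv.symm t).1 : ℕ))
  refine ⟨AQ, AK, BQ, BK, fun x => multiheadAttention_eq_stackScalar fun t => ?_⟩
  rw [attention_eq_relu_mul_smul_one (hK t x) (hQ t x), reluSplit, hfg, mul_left_comm]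

/-- There is a two-layer ReLU encoder `ε₂ = φ₂ ∘ α₂ ∘ φ₁ ∘ α₁` — multihead ReLU attention
modules `α₁, α₂` and one-layer ReLU feed-forward neural networks `φ₁, φ₂` applied columnwise —
such that for every `X ∈ ℝ^{n×p}`, `ε₂(X)` is the block-diagonal matrix with `p` diagonal
blocks, each equal to the quadratic Veronese vector `v₂(X) ∈ ℝ^{(np+2)(np+1)/2}` of all
monomials of degree at most two in the entries of `X` (in some fixed order, given by a
bijection `E`).  In particular every such monomial appears in every column of `ε₂(X)`. -/
theorem quadratic_veronese_is_two_layer_encoder (n p : ℕ) :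
    ∃ (d₁ m₁ h₁ w₁ q₁ d₂ m₂ h₂ w₂ : ℕ)
      (AQ₁ AK₁ : Fin h₁ → Matrix (Fin d₁) (Fin n) ℝ)
      (AV₁ : Fin h₁ → Matrix (Fin m₁) (Fin n) ℝ)
      (BQ₁ BK₁ : Fin h₁ → Matrix (Fin d₁) (Fin p) ℝ)
      (BV₁ : Fin h₁ → Matrix (Fin m₁) (Fin p) ℝ)
      (A₁ : Matrix (Fin w₁) (Fin (h₁ * m₁)) ℝ) (c₁ : Fin w₁ → ℝ)
      (A₁' : Matrix (Fin q₁) (Fin w₁) ℝ) (c₁' : Fin q₁ → ℝ)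
      (AQ₂ AK₂ : Fin h₂ → Matrix (Fin d₂) (Fin q₁) ℝ)
      (AV₂ : Fin h₂ → Matrix (Fin m₂) (Fin q₁) ℝ)
      (BQ₂ BK₂ : Fin h₂ → Matrix (Fin d₂) (Fin p) ℝ)
      (BV₂ : Fin h₂ → Matrix (Fin m₂) (Fin p) ℝ)
      (A₂ : Matrix (Fin w₂) (Fin (h₂ * m₂)) ℝ) (c₂ : Fin w₂ → ℝ)
      (A₂' : Matrix (Fin (p * ((n * p + 2) * (n * p + 1) / 2))) (Fin w₂) ℝ)
      (c₂' : Fin (p * ((n * p + 2) * (n * p + 1) / 2)) → ℝ)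
      (E : QuadIdx n p ≃ Fin ((n * p + 2) * (n * p + 1) / 2)),
      ∀ (X : Matrix (Fin n) (Fin p) ℝ)
        (i : Fin (p * ((n * p + 2) * (n * p + 1) / 2))) (j : Fin p),
        colwise (oneLayerNN A₂ c₂ A₂' c₂')
          (multiheadAttention AQ₂ AK₂ AV₂ BQ₂ BK₂ BV₂
            (colwise (oneLayerNN A₁ c₁ A₁' c₁')
              (multiheadAttention AQ₁ AK₁ AV₁ BQ₁ BK₁ BV₁ X))) i j
          = if (finProdFinEquiv.symm i).1 = j
              then ∏ a : Fin n × Fin p,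
                X a.1 a.2 ^ ((E.symm (finProdFinEquiv.symm i).2).1 a : ℕ)
              else 0 := by
  obtain ⟨d₁, m₁, h₁, AQ₁, AK₁, AV₁, BQ₁, BK₁, BV₁, hentry⟩ :=
    exists_multiheadAttention_isScalarReadable_entry n p
  set α₁ := multiheadAttention AQ₁ AK₁ AV₁ BQ₁ BK₁ BV₁
  obtain ⟨w₁, A₁, c₁, A₁', c₁', hφ₁⟩ :=
    exists_oneLayerNN_eq_mulVec (1 : Matrix (Fin (h₁ * m₁)) (Fin (h₁ * m₁)) ℝ)
  let E := Fintype.equivFinOfCardEq (card_quadIdx n p)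
  have hv (κ) : ∃ f g, IsScalarReadable α₁ f ∧ IsScalarReadable α₁ g ∧
      ∀ X : Matrix (Fin n) (Fin p) ℝ, ∏ a, X a.1 a.2 ^ ((E.symm κ).1 a : ℕ) = f X * g X := by
    obtain ⟨o₁, o₂, hmonomial⟩ := exists_prod_pow_eq_mul (R := ℝ) (E.symm κ)
    exact ⟨_, _, .option_elim (fun a => hentry a.1 a.2) o₁,
      .option_elim (fun a => hentry a.1 a.2) o₂, fun X => hmonomial fun a => X a.1 a.2⟩
  obtain ⟨AQ₂, AK₂, BQ₂, BK₂, hα₂⟩ := exists_multiheadAttention_eq_stackScalar_reluSplit hv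
  obtain ⟨L, hL⟩ := exists_mul_stackScalar_eq_blockDiagVec p (unsplit _)
  obtain ⟨w₂, A₂, c₂, A₂', c₂', hφ₂⟩ := exists_oneLayerNN_eq_mulVec L
  refine ⟨d₁, m₁, h₁, w₁, h₁ * m₁, p, p, _, w₂, AQ₁, AK₁, AV₁, BQ₁, BK₁, BV₁, A₁, c₁, A₁', c₁',
    AQ₂, AK₂, fun _ => 0, BQ₂, BK₂, fun _ => 1, A₂, c₂, A₂', c₂', E, fun X i j => ?_⟩
  rw [hφ₂, hφ₁, colwise_mulVec, colwise_mulVec, Matrix.one_mul, hα₂, hL, unsplit_mulVec_reluSplit]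
  rfl
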